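/- arXiv:math/0009018 — 3 statements merged into one kernel-verified Lean document; each statement's English description precedes it below -/
import Mathlib

section
/- Suppose that for every λ < 0 the functions x ↦ e^{λ r_j(x)}, j = 0, 1, …, k, are linearly independent as functions on I (i.e., if c_0, c_1, …, c_k are reals with Σ_{j=0}^k c_j e^{λ r_j(x)} = 0 for all x ∈ I, then all c_j = 0). Then the degeneracy condition does not hold at any D ∈ (0, D_max). -/
open Real MeasureTheory Finset
open scoped Classical

/-- `Q` is a probability mass function on `Fin k`. -/
def IsPmf {k : ℕ} (Q : Fin k → ℝ) : Prop := (∀ j, 0 ≤ Q j) ∧ ∑ j, Q j = 1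

/-- `Λ_{P,Q}(λ) = E_P[ln Σ_j Q_j e^{λ ρ(X,a_j)}]`. -/
noncomputable def Lam {k : ℕ} (P : Measure ℝ) (ρ : ℝ → Fin k → ℝ)
    (Q : Fin k → ℝ) (l : ℝ) : ℝ :=
  ∫ x, Real.log (∑ j, Q j * Real.exp (l * ρ x j)) ∂P

/-- The cost `∫ Σ_j W(x)({a_j}) log₂ (W(x)({a_j}) / Q_j) dP(x)` of a Markov kernel,
with the conventions `0 · log 0 = 0` (automatic in Lean) and value `⊤` if on a set of
positive `P`-measure `w x j > 0` for some `j` with `Q j = 0`. -/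
noncomputable def wCost {k : ℕ} (P : Measure ℝ) (Q : Fin k → ℝ)
    (w : ℝ → Fin k → ℝ) : EReal :=
  if ∀ᵐ x ∂P, ∀ j, 0 < w x j → 0 < Q j then
    ((∫ x, ∑ j, w x j * Real.logb 2 (w x j / Q j) ∂P : ℝ) : EReal)
  else ⊤

/-- `R(P,Q,D)`: infimum over Markov kernels `w` from `ℝ` to `Fin k` with
`∫ Σ_j w x j ρ(x,a_j) dP ≤ D` of the relative-entropy cost. -/
noncomputable def RPQ {k : ℕ} (P : Measure ℝ) (ρ : ℝ → Fin k → ℝ)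
    (Q : Fin k → ℝ) (D : ℝ) : EReal :=
  ⨅ w ∈ {w : ℝ → Fin k → ℝ | Measurable w ∧ (∀ x j, 0 ≤ w x j) ∧
      (∀ x, ∑ j, w x j = 1) ∧ ∫ x, ∑ j, w x j * ρ x j ∂P ≤ D}, wCost P Q w

/-- The rate-distortion function `R(D) = inf_Q R(P,Q,D)`. -/
noncomputable def RofD {k : ℕ} (P : Measure ℝ) (ρ : ℝ → Fin k → ℝ) (D : ℝ) : EReal :=
  ⨅ Q ∈ {Q : Fin k → ℝ | IsPmf Q}, RPQ P ρ Q D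

/-- `D_max = min_j E_P[ρ(X,a_j)]`. -/
noncomputable def Dmax {k : ℕ} (P : Measure ℝ) (ρ : ℝ → Fin k → ℝ) : ℝ :=
  sInf (Set.range fun j => ∫ x, ρ x j ∂P)

/-- The degeneracy condition at distortion level `D`: there are a pmf `Q*` achieving
`R(P,Q*,D) = R(D)` and `λ* < 0` with `Λ'_{P,Q*}(λ*) = D`,
`λ*·D − Λ_{P,Q*}(λ*) = (ln 2)·R(D)`, and `x ↦ Σ_j Q*_j e^{λ* ρ(x,a_j)}` constant
for `P`-almost every `x`. -/
def DegenAt {k : ℕ} (P : Measure ℝ) (ρ : ℝ → Fin k → ℝ) (D : ℝ) : Prop :=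
  ∃ Q : Fin k → ℝ, IsPmf Q ∧ RPQ P ρ Q D = RofD P ρ D ∧
    ∃ l : ℝ, l < 0 ∧ HasDerivAt (Lam P ρ Q) D l ∧
      ((l * D - Lam P ρ Q l : ℝ) : EReal) = (Real.log 2 : EReal) * RofD P ρ D ∧
      ∃ c : ℝ, ∀ᵐ x ∂P, ∑ j, Q j * Real.exp (l * ρ x j) = c

/-!
If `Σ_j Q_j e^{λ ρ(x,a_j)}` were `P`-a.s. equal to a constant `c`, then, being continuous on `I`
and `P` charging every nonempty open subset of `I` (through the positive density `g`), it would
equal `c` everywhere on `I`. That is a vanishing linear combination of `e^{λ r_j}`, `j = 0,…,k`,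
with coefficients `(-c, Q_1, …, Q_k)`; linear independence forces `Q = 0`, which is not a pmf.
-/

lemma exists_nat_measure_inter_setOf_le_pos {α : Type*} [MeasurableSpace α] {μ : Measure α}
    {s : Set α} (hs : 0 < μ s) (g : α → ℝ) : ∃ n : ℕ, 0 < μ (s ∩ {x | g x ≤ n}) := by
  by_contra! hnull
  have hcover : s ⊆ ⋃ n : ℕ, s ∩ {x | g x ≤ n} := fun x hx =>
    Set.mem_iUnion.mpr ⟨⌈g x⌉₊, hx, Nat.le_ceil (g x)⟩
  have : μ s = 0 :=
    measure_mono_null hcover (measure_iUnion_null fun n => nonpos_iff_eq_zero.mp (hnull n))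
  exact hs.ne' this

lemma setIntegral_pos_of_pos_of_le {α : Type*} [MeasurableSpace α] {μ : Measure α}
    {s : Set α} {g : α → ℝ} {C : ℝ} (hg : Measurable g) (hs : MeasurableSet s)
    (hs0 : 0 < μ s) (hsfin : μ s ≠ ⊤) (hgpos : ∀ x ∈ s, 0 < g x) (hgC : ∀ x ∈ s, g x ≤ C) :
    0 < ∫ x in s, g x ∂μ := by
  have hint : IntegrableOn g s μ := by
    refine Measure.integrableOn_of_bounded (M := C) hsfin hg.aestronglyMeasurable ?_
    filter_upwards [ae_restrict_mem hs] with x hx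
    rw [Real.norm_eq_abs, abs_of_pos (hgpos x hx)]
    exact hgC x hx
  rw [setIntegral_pos_iff_support_of_nonneg_ae _ hint]
  · exact hs0.trans_le (measure_mono fun x hx => ⟨(hgpos x hx).ne', hx⟩)
  · filter_upwards [ae_restrict_mem hs] with x hx
    exact (hgpos x hx).le

section DensityMinorant

variable {P : Measure ℝ} {U : Set ℝ} {g : ℝ → ℝ}

lemma measure_pos_of_volume_pos_of_density_le (hg : Measurable g)
    (hgpos : ∀ x ∈ U, 0 < g x)
    (habs : ∀ s ⊆ U, MeasurableSet s → ENNReal.ofReal (∫ x in s, g x) ≤ P s)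
    {s : Set ℝ} (hs : MeasurableSet s) (hsU : s ⊆ U) (hs0 : 0 < volume s)
    (hsfin : volume s ≠ ⊤) : 0 < P s := by
  obtain ⟨n, hn⟩ := exists_nat_measure_inter_setOf_le_pos hs0 g
  set t := s ∩ {x | g x ≤ n}
  have ht : MeasurableSet t := hs.inter (hg measurableSet_Iic)
  have htU : t ⊆ U := Set.inter_subset_left.trans hsU
  have hint : 0 < ∫ x in t, g x :=
    setIntegral_pos_of_pos_of_le hg ht hn
      (ne_top_of_le_ne_top hsfin (measure_mono Set.inter_subset_left))
      (fun x hx => hgpos x (htU hx)) fun x hx => hx.2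
  calc 0 < ENNReal.ofReal (∫ x in t, g x) := ENNReal.ofReal_pos.mpr hint
    _ ≤ P t := habs t htU ht
    _ ≤ P s := measure_mono Set.inter_subset_left

lemma measure_pos_of_isOpen_of_density_le (hg : Measurable g)
    (hgpos : ∀ x ∈ U, 0 < g x)
    (habs : ∀ s ⊆ U, MeasurableSet s → ENNReal.ofReal (∫ x in s, g x) ≤ P s)
    {V : Set ℝ} (hV : IsOpen V) (hVne : V.Nonempty) (hVU : V ⊆ U) : 0 < P V := by
  obtain ⟨x, hx⟩ := hVne
  obtain ⟨ε, hε, hball⟩ := Metric.isOpen_iff.mp hV x hx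
  have hpos : 0 < P (Metric.ball x ε) :=
    measure_pos_of_volume_pos_of_density_le hg hgpos habs measurableSet_ball
      (hball.trans hVU) (Metric.measure_ball_pos volume x hε) measure_ball_lt_top.ne
  exact hpos.trans_le (measure_mono hball)

end DensityMinorant

lemma eqOn_of_ae_eq_const {X : Type*} [TopologicalSpace X] [MeasurableSpace X]
    {P : Measure X} {U : Set X} {f : X → ℝ} {c : ℝ} (hU : IsOpen U) (hf : ContinuousOn f U)
    (hfc : ∀ᵐ x ∂P, f x = c)
    (hPpos : ∀ V : Set X, IsOpen V → V.Nonempty → V ⊆ U → 0 < P V) :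
    ∀ x ∈ U, f x = c := by
  by_contra! hne
  have hopen : IsOpen (U ∩ f ⁻¹' {c}ᶜ) := hf.isOpen_inter_preimage hU isOpen_compl_singleton
  have hnull : P (U ∩ f ⁻¹' {c}ᶜ) = 0 :=
    measure_mono_null Set.inter_subset_right (ae_iff.mp hfc)
  obtain ⟨x, hxU, hx⟩ := hne
  exact (hPpos _ hopen ⟨x, hxU, hx⟩ Set.inter_subset_left).ne' hnull

theorem stmt_3_general {k : ℕ}
    (ρ : ℝ → Fin k → ℝ)
    (P : Measure ℝ)
    (a b : ℝ)
    (g : ℝ → ℝ) (hg : Measurable g) (hgpos : ∀ x ∈ Set.Ioo a b, 0 < g x)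
    (habs : ∀ s ⊆ Set.Ioo a b, MeasurableSet s → ENNReal.ofReal (∫ x in s, g x) ≤ P s)
    (hcont : ∀ j, ContinuousOn (fun x => ρ x j) (Set.Ioo a b))
    (r : Fin (k + 1) → ℝ → ℝ)
    (hr0 : ∀ x, r 0 x = 0)
    (hrsucc : ∀ (j : Fin k) (x : ℝ), r j.succ x = ρ x j)
    (hLI : ∀ l : ℝ, l < 0 → ∀ c : Fin (k + 1) → ℝ,
      (∀ x ∈ Set.Ioo a b, ∑ j, c j * Real.exp (l * r j x) = 0) → ∀ j, c j = 0) :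
    ∀ D : ℝ, 0 < D → D < Dmax P ρ → ¬ DegenAt P ρ D := by
  rintro D - - ⟨Q, hQ, -, l, hl, -, -, c, hc⟩
  have hconst : ∀ x ∈ Set.Ioo a b, ∑ j, Q j * exp (l * ρ x j) = c :=
    eqOn_of_ae_eq_const isOpen_Ioo
      (continuousOn_finsetSum _ fun j _ => continuousOn_const.mul
        (continuousOn_const.mul (hcont j)).rexp) hc
      fun _ => measure_pos_of_isOpen_of_density_le hg hgpos habs
  have hcoeff := hLI l hl (Fin.cons (-c) Q) fun x hx => by
    simp only [Fin.sum_univ_succ, Fin.cons_zero, Fin.cons_succ, hr0, hrsucc, mul_zero,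
      exp_zero, mul_one, hconst x hx, neg_add_cancel]
  have hQ0 : ∑ j, Q j = 0 := Finset.sum_eq_zero fun j _ => by simpa using hcoeff j.succ
  exact one_ne_zero (hQ.2.symm.trans hQ0)

/-- **Theorem 2.** If for every `λ < 0` the functions `e^{λ r_j(·)}`, `j = 0,1,…,k`,
are linearly independent on `I`, then the degeneracy condition does not hold at any
`D ∈ (0, D_max)`. -/
theorem stmt_3 {k : ℕ} (hk : 0 < k) (M : ℝ)
    (ρ : ℝ → Fin k → ℝ) (hρmeas : ∀ j, Measurable fun x => ρ x j)
    (hρnn : ∀ x j, 0 ≤ ρ x j) (hρM : ∀ x j, ρ x j ≤ M)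
    (hρmin : ∀ x, ∃ j, ρ x j = 0)
    (P : Measure ℝ) [IsProbabilityMeasure P]
    (a b : ℝ) (hab : a < b)
    (g : ℝ → ℝ) (hg : Measurable g) (hgpos : ∀ x ∈ Set.Ioo a b, 0 < g x)
    (habs : ∀ s ⊆ Set.Ioo a b, MeasurableSet s → ENNReal.ofReal (∫ x in s, g x) ≤ P s)
    (hcont : ∀ j, ContinuousOn (fun x => ρ x j) (Set.Ioo a b))
    (hDmax : 0 < Dmax P ρ)
    (r : Fin (k + 1) → ℝ → ℝ)
    (hr0 : ∀ x, r 0 x = 0)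
    (hrsucc : ∀ (j : Fin k) (x : ℝ), r j.succ x = ρ x j)
    (hLI : ∀ l : ℝ, l < 0 → ∀ c : Fin (k + 1) → ℝ,
      (∀ x ∈ Set.Ioo a b, ∑ j, c j * Real.exp (l * r j x) = 0) → ∀ j, c j = 0) :
    ∀ D : ℝ, 0 < D → D < Dmax P ρ → ¬ DegenAt P ρ D :=
  stmt_3_general ρ P a b g hg hgpos habs hcont r hr0 hrsucc hLI
end

section
/- Suppose there exist distinct points x_0, x_1, …, x_k in I such that for all 0 ≤ i ≠ j ≤ k with j ≠ 0 one has r_j(x_j) > r_j(x_i). Then there exists ε > 0 such that the degeneracy condition fails at every D ∈ (0, ε); that is, the degeneracy condition cannot hold at distortion levels D > 0 arbitrarily close to zero. -/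
open Real MeasureTheory Finset
open scoped Classical

/-!
If the degeneracy condition holds at `D` with tilting parameter `λ < 0`, the partition function
`x ↦ Σ_j Q_j e^{λ r_j(x)}` is `P`-a.s. equal to a constant `c`; being continuous on `I`, where `P`
dominates a measure with positive density, it equals `c` on all of `I`, in particular at
`x_0, …, x_k`. As `r_0 ≡ 0`, the vector `(-c, Q)` then lies in the kernel of the matrix
`(e^{λ r_j(x_i)})_{i,j}`. Its determinant is the exponential polynomial
`Σ_σ sgn σ · e^{λ Σ_j r_j(x_{σ j})}`, and the hypothesis on the points makes the identity the
unique maximiser of the exponent, so its coefficient `1` is not cancelled; an exponential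
polynomial that is not identically zero has no zeros for `λ` sufficiently negative. Finally `D = Λ'(λ) ≥ e^{λM} D_max`, so small `D`
forces `λ` to be that negative, and then `Q = 0`, which is not a probability vector.
-/

open Filter Topology

theorem tendsto_sum_mul_exp_sub_min' (T : Finset ℝ) (hT : T.Nonempty) (c : ℝ → ℝ) :
    Tendsto (fun l => ∑ t ∈ T, c t * exp (l * (t - T.min' hT))) atBot
      (𝓝 (c (T.min' hT))) := by
  have hterm : ∀ t ∈ T, Tendsto (fun l => c t * exp (l * (t - T.min' hT))) atBot
      (𝓝 (if t = T.min' hT then c t else 0)) := by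
    intro t ht
    split_ifs with h
    · simp [h]
    · have hpos : 0 < t - T.min' hT := sub_pos.2 ((T.min'_le t ht).lt_of_ne' h)
      simpa using (tendsto_exp_atBot.comp (tendsto_id.atBot_mul_const hpos)).const_mul (c t)
  simpa [Finset.sum_ite_eq', T.min'_mem hT] using tendsto_finsetSum T hterm

theorem eventually_sum_mul_exp_ne_zero (T : Finset ℝ) (c : ℝ → ℝ) (h : ∃ t ∈ T, c t ≠ 0) :
    ∀ᶠ l in atBot, ∑ t ∈ T, c t * exp (l * t) ≠ 0 := by
  set T' := T.filter (c · ≠ 0)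
  have hT' : T'.Nonempty := by simpa [T', Finset.Nonempty] using h
  have hc : c (T'.min' hT') ≠ 0 := (Finset.mem_filter.1 (T'.min'_mem hT')).2
  filter_upwards [(tendsto_sum_mul_exp_sub_min' T' hT' c).eventually_ne hc] with l hl
  have hfactor : ∑ t ∈ T, c t * exp (l * t)
      = exp (l * T'.min' hT') * ∑ t ∈ T', c t * exp (l * (t - T'.min' hT')) := by
    rw [← Finset.sum_filter_of_ne fun t _ ht => left_ne_zero_of_mul ht, Finset.mul_sum]
    refine Finset.sum_congr rfl fun t _ => ?_
    rw [mul_sub, exp_sub]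
    field_simp
  rw [hfactor]
  exact mul_ne_zero (exp_ne_zero _) hl

theorem eventually_sum_mul_exp_comp_ne_zero {ι : Type*} (s : Finset ι)
    (f E : ι → ℝ) {i₀ : ι} (hi₀ : i₀ ∈ s) (hE : ∀ i ∈ s, i ≠ i₀ → E i ≠ E i₀)
    (hf : f i₀ ≠ 0) : ∀ᶠ l in atBot, ∑ i ∈ s, f i * exp (l * E i) ≠ 0 := by
  have hgroup : ∀ l, ∑ i ∈ s, f i * exp (l * E i)
      = ∑ t ∈ s.image E, (∑ i ∈ s with E i = t, f i) * exp (l * t) := by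
    intro l
    rw [← Finset.sum_fiberwise_of_maps_to fun i hi => Finset.mem_image_of_mem E hi]
    refine Finset.sum_congr rfl fun t _ => ?_
    rw [Finset.sum_mul]
    exact Finset.sum_congr rfl fun i hi => by rw [(Finset.mem_filter.1 hi).2]
  have hcoeff : ∑ i ∈ s with E i = E i₀, f i = f i₀ :=
    Finset.sum_eq_single_of_mem i₀ (by simp [hi₀]) fun i hi hne =>
      absurd (Finset.mem_filter.1 hi).2 (hE i (Finset.mem_filter.1 hi).1 hne)
  simp only [hgroup]
  exact eventually_sum_mul_exp_ne_zero _ _ ⟨E i₀, Finset.mem_image_of_mem E hi₀, hcoeff ▸ hf⟩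

theorem sum_perm_apply_lt_sum_diag {ι : Type*} [Fintype ι] (w : ι → ι → ℝ)
    (i₀ : ι) (hle : ∀ i, w i i₀ ≤ w i₀ i₀) (hlt : ∀ i j, i ≠ j → j ≠ i₀ → w i j < w j j)
    {σ : Equiv.Perm ι} (hσ : σ ≠ 1) : ∑ i, w (σ i) i < ∑ i, w i i := by
  have hcol : ∀ i, w (σ i) i ≤ w i i := by
    intro i
    by_cases hi : i = i₀
    · exact hi ▸ hle _
    by_cases hfix : σ i = i
    · rw [hfix]
    · exact (hlt _ _ hfix hi).le
  obtain ⟨j, hj, hmoved⟩ : ∃ j, j ≠ i₀ ∧ σ j ≠ j := by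
    by_contra! hfix
    refine hσ (Equiv.ext fun i => ?_)
    by_cases hi : i = i₀
    · subst hi
      by_contra hne
      exact hne (σ.injective (hfix _ hne))
    · exact hfix i hi
  exact Finset.sum_lt_sum (fun i _ => hcol i) ⟨j, Finset.mem_univ j, hlt _ _ hmoved hj⟩

theorem eventually_det_exp_ne_zero {ι : Type*} [Fintype ι] [DecidableEq ι] (w : ι → ι → ℝ)
    (hw : ∀ σ : Equiv.Perm ι, σ ≠ 1 → ∑ i, w (σ i) i ≠ ∑ i, w i i) :
    ∀ᶠ l in atBot, (Matrix.of fun i j => exp (l * w i j)).det ≠ 0 := by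
  have hdet : ∀ l, (Matrix.of fun i j => exp (l * w i j)).det
      = ∑ σ : Equiv.Perm ι, ((Equiv.Perm.sign σ : ℤ) : ℝ) * exp (l * ∑ i, w (σ i) i) := by
    intro l
    simp only [Matrix.det_apply, Matrix.of_apply, Units.smul_def, zsmul_eq_mul, Finset.mul_sum,
      exp_sum]
  simp only [hdet]
  exact eventually_sum_mul_exp_comp_ne_zero Finset.univ (fun σ => ((Equiv.Perm.sign σ : ℤ) : ℝ))
    (fun σ => ∑ i, w (σ i) i) (Finset.mem_univ 1) (fun σ _ hσ => hw σ hσ) (by simp)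

theorem eq_zero_of_sum_mul_succ_eq_const {R : Type*} [CommRing R] [IsDomain R] {n : ℕ}
    {A : Matrix (Fin (n + 1)) (Fin (n + 1)) R} (hA : A.det ≠ 0) (h0 : ∀ i, A i 0 = 1)
    {Q : Fin n → R} {c : R} (h : ∀ i, ∑ m, Q m * A i m.succ = c) : Q = 0 := by
  have hker : A.mulVec (Fin.cons (-c) Q) = 0 := by
    funext i
    simp [Matrix.mulVec, dotProduct, Fin.sum_univ_succ, h0, mul_comm (A i _), h i]
  funext m
  simpa using congrFun (Matrix.eq_zero_of_mulVec_eq_zero hA hker) m.succ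

theorem IsPmf.exists_pos {k : ℕ} {Q : Fin k → ℝ} (hQ : IsPmf Q) : ∃ j, 0 < Q j := by
  by_contra! h
  have hzero : ∀ j, Q j = 0 := fun j => (h j).antisymm (hQ.1 j)
  simpa [hzero] using hQ.2

noncomputable def partitionSum {k : ℕ} (ρ : ℝ → Fin k → ℝ) (Q : Fin k → ℝ) (l x : ℝ) : ℝ :=
  ∑ j, Q j * exp (l * ρ x j)

noncomputable def tiltedDistortion {k : ℕ} (ρ : ℝ → Fin k → ℝ) (Q : Fin k → ℝ) (l x : ℝ) : ℝ :=
  (∑ j, Q j * (exp (l * ρ x j) * ρ x j)) / partitionSum ρ Q l x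

section Tilting

variable {k : ℕ} {ρ : ℝ → Fin k → ℝ} {Q : Fin k → ℝ} {M : ℝ} {P : Measure ℝ}

theorem measurable_partitionSum (hρ : ∀ j, Measurable fun x => ρ x j) (l : ℝ) :
    Measurable (partitionSum ρ Q l) :=
  Finset.measurable_sum _ fun j _ => ((hρ j).const_mul l).exp.const_mul (Q j)

theorem hasDerivAt_partitionSum (l x : ℝ) :
    HasDerivAt (fun t => partitionSum ρ Q t x) (∑ j, Q j * (exp (l * ρ x j) * ρ x j)) l :=
  HasDerivAt.fun_sum fun j _ => ((hasDerivAt_mul_const (ρ x j)).exp).const_mul (Q j)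

theorem continuousOn_partitionSum {s : Set ℝ} (hρ : ∀ j, ContinuousOn (fun x => ρ x j) s)
    (Q : Fin k → ℝ) (l : ℝ) : ContinuousOn (partitionSum ρ Q l) s :=
  continuousOn_finsetSum _ fun j _ =>
    continuousOn_const.mul (continuous_exp.comp_continuousOn (continuousOn_const.mul (hρ j)))

theorem single_le_partitionSum (hQ : IsPmf Q) (l x : ℝ) (j : Fin k) :
    Q j * exp (l * ρ x j) ≤ partitionSum ρ Q l x :=
  Finset.single_le_sum (f := fun j => Q j * exp (l * ρ x j))
    (fun j _ => mul_nonneg (hQ.1 j) (exp_pos _).le) (Finset.mem_univ j)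

theorem partitionSum_pos (hQ : IsPmf Q) (l x : ℝ) : 0 < partitionSum ρ Q l x := by
  obtain ⟨j, hj⟩ := hQ.exists_pos
  exact (mul_pos hj (exp_pos _)).trans_le (single_le_partitionSum hQ l x j)

theorem partitionSum_le_one (hQ : IsPmf Q) {l : ℝ} (hl : l ≤ 0) {x : ℝ}
    (hρ : ∀ j, 0 ≤ ρ x j) : partitionSum ρ Q l x ≤ 1 := by
  rw [← hQ.2]
  exact Finset.sum_le_sum fun j _ =>
    mul_le_of_le_one_right (hQ.1 j) (exp_le_one_iff.2 (mul_nonpos_of_nonpos_of_nonneg hl (hρ j)))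

theorem abs_log_partitionSum_le (hQ : IsPmf Q) {j₀ : Fin k} (hj₀ : 0 < Q j₀) (l : ℝ) {x : ℝ}
    (hρ : ∀ j, |ρ x j| ≤ M) : |log (partitionSum ρ Q l x)| ≤ |l| * M + |log (Q j₀)| := by
  have hexp : ∀ j, |l * ρ x j| ≤ |l| * M := fun j => by
    rw [abs_mul]; exact mul_le_mul_of_nonneg_left (hρ j) (abs_nonneg l)
  have hupper : partitionSum ρ Q l x ≤ exp (|l| * M) := by
    calc partitionSum ρ Q l x ≤ ∑ j, Q j * exp (|l| * M) :=
          Finset.sum_le_sum fun j _ => mul_le_mul_of_nonneg_left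
            (exp_le_exp.2 ((le_abs_self _).trans (hexp j))) (hQ.1 j)
      _ = exp (|l| * M) := by rw [← Finset.sum_mul, hQ.2, one_mul]
  have hlower : Q j₀ * exp (-(|l| * M)) ≤ partitionSum ρ Q l x :=
    (mul_le_mul_of_nonneg_left (exp_le_exp.2 (neg_le_of_abs_le (hexp j₀))) hj₀.le).trans
      (single_le_partitionSum hQ l x j₀)
  have hpos := partitionSum_pos (ρ := ρ) hQ l x
  have hlog_upper := log_le_log hpos hupper
  have hlog_lower := log_le_log (by positivity) hlower
  rw [log_exp] at hlog_upper
  rw [log_mul hj₀.ne' (exp_ne_zero _), log_exp] at hlog_lower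
  rw [abs_le]
  constructor <;> linarith [neg_abs_le (log (Q j₀)), abs_nonneg (log (Q j₀))]

theorem tiltedDistortion_nonneg (hQ : IsPmf Q) (l : ℝ) {x : ℝ} (hρ : ∀ j, 0 ≤ ρ x j) :
    0 ≤ tiltedDistortion ρ Q l x :=
  div_nonneg (Finset.sum_nonneg fun j _ => mul_nonneg (hQ.1 j) (mul_nonneg (exp_pos _).le (hρ j)))
    (partitionSum_pos hQ l x).le

theorem tiltedDistortion_le (hQ : IsPmf Q) (l : ℝ) {x : ℝ} (hρ : ∀ j, ρ x j ≤ M) :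
    tiltedDistortion ρ Q l x ≤ M := by
  rw [tiltedDistortion, div_le_iff₀ (partitionSum_pos hQ l x), partitionSum, Finset.mul_sum]
  refine Finset.sum_le_sum fun j _ => ?_
  rw [mul_comm M, mul_assoc]
  exact mul_le_mul_of_nonneg_left (mul_le_mul_of_nonneg_left (hρ j) (exp_pos _).le) (hQ.1 j)

theorem exp_mul_sum_le_tiltedDistortion (hQ : IsPmf Q) {l : ℝ} (hl : l ≤ 0) {x : ℝ}
    (hρnn : ∀ j, 0 ≤ ρ x j) (hρM : ∀ j, ρ x j ≤ M) :
    exp (l * M) * ∑ j, Q j * ρ x j ≤ tiltedDistortion ρ Q l x := by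
  have hnum : exp (l * M) * ∑ j, Q j * ρ x j ≤ ∑ j, Q j * (exp (l * ρ x j) * ρ x j) := by
    rw [Finset.mul_sum]
    refine Finset.sum_le_sum fun j _ => ?_
    rw [mul_left_comm]
    exact mul_le_mul_of_nonneg_left (mul_le_mul_of_nonneg_right
      (exp_le_exp.2 (mul_le_mul_of_nonpos_left (hρM j) hl)) (hρnn j)) (hQ.1 j)
  refine hnum.trans ?_
  rw [tiltedDistortion, le_div_iff₀ (partitionSum_pos hQ l x)]
  exact mul_le_of_le_one_right
    (Finset.sum_nonneg fun j _ => mul_nonneg (hQ.1 j) (mul_nonneg (exp_pos _).le (hρnn j)))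
    (partitionSum_le_one hQ hl hρnn)

theorem integrable_tiltedDistortion [IsFiniteMeasure P] (hQ : IsPmf Q)
    (hρmeas : ∀ j, Measurable fun x => ρ x j) (hρnn : ∀ x j, 0 ≤ ρ x j)
    (hρM : ∀ x j, ρ x j ≤ M) (l : ℝ) : Integrable (tiltedDistortion ρ Q l) P := by
  have hmeas : Measurable (tiltedDistortion ρ Q l) :=
    (Finset.measurable_sum _ fun j _ =>
      (((hρmeas j).const_mul l).exp.mul (hρmeas j)).const_mul (Q j)).div
      (measurable_partitionSum hρmeas l)
  refine Integrable.mono' (integrable_const M) hmeas.aestronglyMeasurable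
    (ae_of_all _ fun x => ?_)
  rw [norm_of_nonneg (tiltedDistortion_nonneg hQ l (hρnn x))]
  exact tiltedDistortion_le hQ l (hρM x)

theorem hasDerivAt_Lam [IsFiniteMeasure P] (hQ : IsPmf Q)
    (hρmeas : ∀ j, Measurable fun x => ρ x j) (hρnn : ∀ x j, 0 ≤ ρ x j)
    (hρM : ∀ x j, ρ x j ≤ M) (l : ℝ) :
    HasDerivAt (Lam P ρ Q) (∫ x, tiltedDistortion ρ Q l x ∂P) l := by
  obtain ⟨j₀, hj₀⟩ := hQ.exists_pos
  have habs : ∀ x j, |ρ x j| ≤ M := fun x j => (abs_of_nonneg (hρnn x j)).trans_le (hρM x j)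
  have hlog_int : Integrable (fun x => log (partitionSum ρ Q l x)) P :=
    Integrable.mono' (integrable_const (|l| * M + |log (Q j₀)|))
      (measurable_partitionSum hρmeas l).log.aestronglyMeasurable
      (ae_of_all _ fun x => abs_log_partitionSum_le hQ hj₀ l (habs x))
  have hderiv := hasDerivAt_integral_of_dominated_loc_of_deriv_le (μ := P)
    (F := fun t x => log (partitionSum ρ Q t x)) (bound := fun _ => M)
    (Metric.ball_mem_nhds l one_pos)
    (Eventually.of_forall fun t => (measurable_partitionSum hρmeas t).log.aestronglyMeasurable)
    hlog_int (integrable_tiltedDistortion hQ hρmeas hρnn hρM l).aestronglyMeasurable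
    (ae_of_all _ fun x t _ => by
      rw [norm_of_nonneg (tiltedDistortion_nonneg hQ t (hρnn x))]
      exact tiltedDistortion_le hQ t (hρM x))
    (integrable_const M)
    (ae_of_all _ fun x t _ =>
      (hasDerivAt_partitionSum t x).log (partitionSum_pos hQ t x).ne')
  exact hderiv.2

end Tilting

theorem Dmax_le_integral {k : ℕ} {P : Measure ℝ} {ρ : ℝ → Fin k → ℝ}
    (hρnn : ∀ x j, 0 ≤ ρ x j) (j : Fin k) : Dmax P ρ ≤ ∫ x, ρ x j ∂P :=
  csInf_le ⟨0, by rintro _ ⟨i, rfl⟩; exact integral_nonneg (hρnn · i)⟩ ⟨j, rfl⟩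

theorem exp_mul_Dmax_le_integral_tiltedDistortion {k : ℕ} {P : Measure ℝ}
    [IsProbabilityMeasure P] {ρ : ℝ → Fin k → ℝ} {Q : Fin k → ℝ} {M l : ℝ} (hQ : IsPmf Q)
    (hρmeas : ∀ j, Measurable fun x => ρ x j) (hρnn : ∀ x j, 0 ≤ ρ x j)
    (hρM : ∀ x j, ρ x j ≤ M) (hl : l ≤ 0) :
    exp (l * M) * Dmax P ρ ≤ ∫ x, tiltedDistortion ρ Q l x ∂P := by
  have hρint : ∀ j, Integrable (fun x => Q j * ρ x j) P := fun j =>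
    (Integrable.mono' (integrable_const M) (hρmeas j).aestronglyMeasurable
      (ae_of_all _ fun x => (norm_of_nonneg (hρnn x j)).trans_le (hρM x j))).const_mul (Q j)
  have hDmax : Dmax P ρ ≤ ∫ x, ∑ j, Q j * ρ x j ∂P :=
    calc Dmax P ρ = ∑ j, Q j * Dmax P ρ := by rw [← Finset.sum_mul, hQ.2, one_mul]
      _ ≤ ∑ j, Q j * ∫ x, ρ x j ∂P :=
          Finset.sum_le_sum fun j _ => mul_le_mul_of_nonneg_left (Dmax_le_integral hρnn j) (hQ.1 j)
      _ = ∫ x, ∑ j, Q j * ρ x j ∂P := by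
          rw [integral_finsetSum _ fun j _ => hρint j]
          simp only [integral_const_mul]
  calc exp (l * M) * Dmax P ρ ≤ ∫ x, exp (l * M) * ∑ j, Q j * ρ x j ∂P := by
        rw [integral_const_mul]
        exact mul_le_mul_of_nonneg_left hDmax (exp_pos _).le
    _ ≤ ∫ x, tiltedDistortion ρ Q l x ∂P :=
        integral_mono ((integrable_finsetSum _ fun j _ => hρint j).const_mul _)
          (integrable_tiltedDistortion hQ hρmeas hρnn hρM l)
          fun x => exp_mul_sum_le_tiltedDistortion hQ hl (hρnn x) (hρM x)

theorem volume_restrict_Ioo_absolutelyContinuous {P : Measure ℝ} {a b : ℝ} {g : ℝ → ℝ}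
    (hg : Measurable g) (hgpos : ∀ x ∈ Set.Ioo a b, 0 < g x)
    (habs : ∀ s ⊆ Set.Ioo a b, MeasurableSet s → ENNReal.ofReal (∫ x in s, g x) ≤ P s) :
    volume.restrict (Set.Ioo a b) ≪ P := by
  refine Measure.AbsolutelyContinuous.mk fun s hs hPs => ?_
  rw [Measure.restrict_apply hs]
  -- `g` need not be integrable on `s ∩ Ioo a b`, so we cut it at the levels `g ≤ n`
  have hlevel : ∀ n : ℕ, volume (s ∩ Set.Ioo a b ∩ {x | g x ≤ n}) = 0 := by
    intro n
    set u := s ∩ Set.Ioo a b ∩ {x | g x ≤ n}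
    have hu : MeasurableSet u :=
      (hs.inter measurableSet_Ioo).inter (measurableSet_le hg measurable_const)
    have huI : u ⊆ Set.Ioo a b := fun x hx => hx.1.2
    have hint : IntegrableOn g u :=
      Measure.integrableOn_of_bounded
        ((measure_mono huI).trans_lt measure_Ioo_lt_top).ne hg.aestronglyMeasurable
        ((ae_restrict_iff' hu).2 (ae_of_all _ fun x hx => by
          rw [norm_of_nonneg (hgpos x (huI hx)).le]; exact hx.2))
    have hgpos_ae : 0 ≤ᵐ[volume.restrict u] g :=
      (ae_restrict_iff' hu).2 (ae_of_all _ fun x hx => (hgpos x (huI hx)).le)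
    have hint_le : ∫ x in u, g x ≤ 0 := ENNReal.ofReal_eq_zero.1
      (nonpos_iff_eq_zero.1 ((habs u huI hu).trans (measure_mono_null
        (fun x hx => hx.1.1) hPs).le))
    by_contra hne
    have hsupp : Function.support g ∩ u = u :=
      Set.inter_eq_right.2 fun x hx => (hgpos x (huI hx)).ne'
    have := (setIntegral_pos_iff_support_of_nonneg_ae hgpos_ae hint).2
      (by rw [hsupp]; exact pos_iff_ne_zero.2 hne)
    linarith
  refine measure_mono_null (fun x hx => ?_) (measure_iUnion_null hlevel)
  obtain ⟨n, hn⟩ := exists_nat_ge (g x)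
  exact Set.mem_iUnion.2 ⟨n, hx, hn⟩

theorem stmt_4_general {k : ℕ} (M : ℝ)
    (ρ : ℝ → Fin k → ℝ) (hρmeas : ∀ j, Measurable fun x => ρ x j)
    (hρnn : ∀ x j, 0 ≤ ρ x j) (hρM : ∀ x j, ρ x j ≤ M)
    (P : Measure ℝ) [IsProbabilityMeasure P]
    (a b : ℝ)
    (g : ℝ → ℝ) (hg : Measurable g) (hgpos : ∀ x ∈ Set.Ioo a b, 0 < g x)
    (habs : ∀ s ⊆ Set.Ioo a b, MeasurableSet s → ENNReal.ofReal (∫ x in s, g x) ≤ P s)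
    (hcont : ∀ j, ContinuousOn (fun x => ρ x j) (Set.Ioo a b))
    (hDmax : 0 < Dmax P ρ)
    (r : Fin (k + 1) → ℝ → ℝ)
    (hr0 : ∀ x, r 0 x = 0)
    (hrsucc : ∀ (j : Fin k) (x : ℝ), r j.succ x = ρ x j)
    (pts : Fin (k + 1) → ℝ) (hptsI : ∀ j, pts j ∈ Set.Ioo a b)
    (hcond : ∀ i j : Fin (k + 1), i ≠ j → j ≠ 0 → r j (pts i) < r j (pts j)) :
    ∃ ε > (0 : ℝ), ∀ D : ℝ, 0 < D → D < ε → D < Dmax P ρ → ¬ DegenAt P ρ D := by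
  obtain ⟨l₀, hdet⟩ := eventually_atBot.1 <| eventually_det_exp_ne_zero (fun i j => r j (pts i))
    fun σ hσ => (sum_perm_apply_lt_sum_diag _ 0 (by simp [hr0]) hcond hσ).ne
  refine ⟨Dmax P ρ * exp (l₀ * M), by positivity, fun D _ hDε _ hdegen => ?_⟩
  obtain ⟨Q, hQ, -, l, hl, hderiv, -, c, hconst⟩ := hdegen
  have hll₀ : l ≤ l₀ := by
    by_contra! hlt
    obtain ⟨j, -⟩ := hQ.exists_pos
    have hM : 0 ≤ M := (hρnn a j).trans (hρM a j)
    have hslope := exp_mul_Dmax_le_integral_tiltedDistortion (P := P) hQ hρmeas hρnn hρM hl.le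
    rw [← hderiv.unique (hasDerivAt_Lam hQ hρmeas hρnn hρM l)] at hslope
    have := exp_le_exp.2 (mul_le_mul_of_nonneg_right hlt.le hM)
    nlinarith
  have hconst_Ioo : Set.EqOn (partitionSum ρ Q l) (fun _ => c) (Set.Ioo a b) :=
    Measure.eqOn_open_of_ae_eq
      ((volume_restrict_Ioo_absolutelyContinuous hg hgpos habs).ae_le hconst) isOpen_Ioo
      (continuousOn_partitionSum hcont Q l) continuousOn_const
  have hQ0 : Q = 0 := eq_zero_of_sum_mul_succ_eq_const (hdet l hll₀) (by simp [hr0])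
    fun i => by simpa [partitionSum, hrsucc, mul_comm] using hconst_Ioo (hptsI i)
  simpa [hQ0] using hQ.2

/-- **Theorem 3(a).** If there are distinct points `x_0,…,x_k` in `I` with
`r_j(x_j) > r_j(x_i)` for all `0 ≤ i ≠ j ≤ k`, `j ≠ 0`, then the degeneracy
condition fails at every small enough distortion level `D > 0`. -/
theorem stmt_4 {k : ℕ} (hk : 0 < k) (M : ℝ)
    (ρ : ℝ → Fin k → ℝ) (hρmeas : ∀ j, Measurable fun x => ρ x j)
    (hρnn : ∀ x j, 0 ≤ ρ x j) (hρM : ∀ x j, ρ x j ≤ M)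
    (hρmin : ∀ x, ∃ j, ρ x j = 0)
    (P : Measure ℝ) [IsProbabilityMeasure P]
    (a b : ℝ) (hab : a < b)
    (g : ℝ → ℝ) (hg : Measurable g) (hgpos : ∀ x ∈ Set.Ioo a b, 0 < g x)
    (habs : ∀ s ⊆ Set.Ioo a b, MeasurableSet s → ENNReal.ofReal (∫ x in s, g x) ≤ P s)
    (hcont : ∀ j, ContinuousOn (fun x => ρ x j) (Set.Ioo a b))
    (hDmax : 0 < Dmax P ρ)
    (r : Fin (k + 1) → ℝ → ℝ)
    (hr0 : ∀ x, r 0 x = 0)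
    (hrsucc : ∀ (j : Fin k) (x : ℝ), r j.succ x = ρ x j)
    (pts : Fin (k + 1) → ℝ) (hptsI : ∀ j, pts j ∈ Set.Ioo a b)
    (hptsinj : Function.Injective pts)
    (hcond : ∀ i j : Fin (k + 1), i ≠ j → j ≠ 0 → r j (pts i) < r j (pts j)) :
    ∃ ε > (0 : ℝ), ∀ D : ℝ, 0 < D → D < ε → D < Dmax P ρ → ¬ DegenAt P ρ D :=
  stmt_4_general M ρ hρmeas hρnn hρM P a b g hg hgpos habs hcont hDmax r hr0 hrsucc pts hptsI hcond
end

section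
/- For every probability mass function Q on Â and every D ≥ 0, the quantity R̃(P,Q,D) := inf over Borel probability measures W on A × Â with A-marginal equal to P and ∫ ρ dW ≤ D of [I_W(X;Y) + H(W_Y‖Q)] (where I_W(X;Y) is the mutual information in bits, equal to the relative entropy of W with respect to the product of its marginals divided by ln 2, W_Y is the Â-marginal of W, and H(W_Y‖Q) := Σ_j W_Y(a_j) log₂(W_Y(a_j)/Q(a_j))) equals R(P,Q,D) := inf over Markov kernels W from A to Â with ∫ Σ_j W(x)({a_j}) ρ(x,a_j) dP(x) ≤ D of ∫ Σ_j W(x)({a_j}) log₂(W(x)({a_j})/Q(a_j)) dP(x). -/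
open Real MeasureTheory Finset
open scoped Classical

/-- `D_min^{P,Q} = E_P[min_{a ∈ supp Q} ρ(X,a)]`. -/
noncomputable def DminPQ {k : ℕ} (P : Measure ℝ) (ρ : ℝ → Fin k → ℝ)
    (Q : Fin k → ℝ) : ℝ :=
  ∫ x, (⨅ j : {j : Fin k // 0 < Q j}, ρ x (j : Fin k)) ∂P

/-- `D_max^{P,Q} = Σ_j Q_j · E_P[ρ(X,a_j)]`. -/
noncomputable def DmaxPQ {k : ℕ} (P : Measure ℝ) (ρ : ℝ → Fin k → ℝ)
    (Q : Fin k → ℝ) : ℝ :=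
  ∑ j, Q j * ∫ x, ρ x j ∂P

/-- The Fenchel–Legendre transform `Λ*_{P,Q}(D) = sup_{λ ≤ 0} [λ·D − Λ_{P,Q}(λ)]`. -/
noncomputable def LamStar {k : ℕ} (P : Measure ℝ) (ρ : ℝ → Fin k → ℝ)
    (Q : Fin k → ℝ) (D : ℝ) : EReal :=
  ⨆ l ∈ Set.Iic (0 : ℝ), ((l * D - Lam P ρ Q l : ℝ) : EReal)

/-- Kullback–Leibler divergence (in nats) between two measures, as an extended real:
`∫ log (dμ/dν) dμ` if `μ ≪ ν` and the log-likelihood ratio is integrable,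
and `⊤` otherwise. -/
noncomputable def klDivE {α : Type*} [MeasurableSpace α] (μ ν : Measure α) : EReal :=
  if μ ≪ ν ∧ Integrable (fun x => Real.log ((μ.rnDeriv ν x).toReal)) μ then
    ((∫ x, Real.log ((μ.rnDeriv ν x).toReal) ∂μ : ℝ) : EReal)
  else ⊤

/-- The mutual information `I_W(X;Y)` in bits of a joint measure `W` on
`ℝ × Fin k`: the relative entropy of `W` with respect to the product of its
marginals, divided by `ln 2`. -/
noncomputable def mutInfo {k : ℕ} (W : Measure (ℝ × Fin k)) : EReal :=
  (((Real.log 2)⁻¹ : ℝ) : EReal) * klDivE W ((W.map Prod.fst).prod (W.map Prod.snd))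

/-- `H(W_Y ‖ Q) = Σ_j W_Y(a_j) log₂ (W_Y(a_j)/Q_j)`, the relative entropy (in bits)
between the second marginal `W_Y` of `W` and `Q`, with value `⊤` if
`W_Y(a_j) > 0` for some `j` with `Q j = 0`. -/
noncomputable def margRelEnt {k : ℕ} (W : Measure (ℝ × Fin k)) (Q : Fin k → ℝ) : EReal :=
  if ∀ j, Q j = 0 → (W.map Prod.snd) {j} = 0 then
    ((∑ j, ((W.map Prod.snd) {j}).toReal *
        Real.logb 2 (((W.map Prod.snd) {j}).toReal / Q j) : ℝ) : EReal)
  else ⊤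


/-! A Markov kernel `w` and the joint law `W = P ⊗ w` determine each other: every `W` with
first marginal `P` disintegrates as `P ⊗ W.condKernel`. On corresponding pairs the two
objectives agree by the chain rule for relative entropy: `W` has density `w x j / q j` with
respect to `P ⊗ q`, where `q = W_Y`, so that
`∫ D(w x ‖ Q) dP(x) = D(W ‖ P ⊗ q) + D(q ‖ Q)`. Hence both infima range over the same values. -/

lemma abs_mul_log_div_le {a : ℝ} (h0 : 0 ≤ a) (h1 : a ≤ 1) (c : ℝ) :
    |a * log (a / c)| ≤ 1 + |log c| := by
  rcases h0.eq_or_lt with rfl | ha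
  · simp only [zero_mul, abs_zero]
    positivity
  rcases eq_or_ne c 0 with rfl | hc
  · simp
  rw [log_div ha.ne' hc, mul_sub]
  calc |a * log a - a * log c| ≤ |a * log a| + |a * log c| := abs_sub _ _
    _ ≤ 1 + |log c| := by
      refine add_le_add ?_ ?_
      · rw [mul_comm]
        exact (abs_log_mul_self_lt a ha h1).le
      · rw [abs_mul, abs_of_nonneg h0]
        exact mul_le_of_le_one_left (abs_nonneg _) h1

lemma mul_logb_div_eq_add {a b c : ℝ} (hb : a ≠ 0 → b ≠ 0) (hc : a ≠ 0 → c ≠ 0) :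
    a * logb 2 (a / c) = a * logb 2 (a / b) + a * logb 2 (b / c) := by
  rcases eq_or_ne a 0 with rfl | ha
  · simp
  rw [logb_div ha (hc ha), logb_div ha (hb ha), logb_div (hb ha) (hc ha)]
  ring

section Integral

variable {α : Type*} [MeasurableSpace α] {μ : Measure α}

lemma integrable_mul_log_div [IsFiniteMeasure μ] {f : α → ℝ} (hf : Measurable f)
    (h0 : ∀ x, 0 ≤ f x) (h1 : ∀ x, f x ≤ 1) (c : ℝ) :
    Integrable (fun x => f x * log (f x / c)) μ :=
  (integrable_const (1 + |log c|)).mono'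
    (hf.mul (measurable_log.comp (hf.div_const c))).aestronglyMeasurable
    (ae_of_all _ fun x => abs_mul_log_div_le (h0 x) (h1 x) c)

lemma integrable_mul_logb_div [IsFiniteMeasure μ] {f : α → ℝ} (hf : Measurable f)
    (h0 : ∀ x, 0 ≤ f x) (h1 : ∀ x, f x ≤ 1) (c : ℝ) :
    Integrable (fun x => f x * logb 2 (f x / c)) μ := by
  simpa only [logb, mul_div_assoc] using (integrable_mul_log_div hf h0 h1 c).div_const (log 2)

lemma ae_integral_pos_of_pos {f : α → ℝ} (h0 : 0 ≤ᵐ[μ] f) (hf : Integrable f μ) :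
    ∀ᵐ x ∂μ, 0 < f x → 0 < ∫ y, f y ∂μ := by
  rcases (integral_nonneg_of_ae h0).eq_or_lt with h | h
  · filter_upwards [(integral_eq_zero_iff_of_nonneg_ae h0 hf).1 h.symm] with x hx hpos
    exact absurd hx hpos.ne'
  · exact ae_of_all _ fun _ _ => h

lemma ae_forall_pos_imp_pos_iff {ι : Type*} [Countable ι] {f : ι → α → ℝ}
    (h0 : ∀ j x, 0 ≤ f j x) (hf : ∀ j, Integrable (f j) μ) {c : ι → ℝ} (hc : ∀ j, 0 ≤ c j) :
    (∀ᵐ x ∂μ, ∀ j, 0 < f j x → 0 < c j) ↔ ∀ j, c j = 0 → ∫ x, f j x ∂μ ≤ 0 := by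
  refine ⟨fun h j hcj => integral_nonpos_of_ae ?_, fun h => ae_all_iff.2 fun j => ?_⟩
  · filter_upwards [h] with x hx
    exact not_lt.1 fun hpos => (hx j hpos).ne' hcj
  · filter_upwards [ae_integral_pos_of_pos (ae_of_all _ (h0 j)) (hf j)] with x hx hpos
    exact (hc j).lt_of_ne fun hcj => (h j hcj.symm).not_gt (hx hpos)

lemma integral_mul_logb_div_eq_add [IsFiniteMeasure μ] {f : α → ℝ} (hf : Measurable f)
    (h0 : ∀ x, 0 ≤ f x) (h1 : ∀ x, f x ≤ 1) {c : ℝ} (hc : ∀ᵐ x ∂μ, 0 < f x → 0 < c) :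
    ∫ x, f x * logb 2 (f x / c) ∂μ =
      ∫ x, f x * logb 2 (f x / ∫ y, f y ∂μ) ∂μ +
        (∫ y, f y ∂μ) * logb 2 ((∫ y, f y ∂μ) / c) := by
  have hfi : Integrable f μ := (integrable_const 1).mono' hf.aestronglyMeasurable
    (ae_of_all _ fun x => by rw [Real.norm_of_nonneg (h0 x)]; exact h1 x)
  have hsplit : ∀ᵐ x ∂μ, f x * logb 2 (f x / c) =
      f x * logb 2 (f x / ∫ y, f y ∂μ) + f x * logb 2 ((∫ y, f y ∂μ) / c) := by
    filter_upwards [hc, ae_integral_pos_of_pos (ae_of_all _ h0) hfi] with x hcx hqx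
    exact mul_logb_div_eq_add (fun hx => (hqx ((h0 x).lt_of_ne' hx)).ne')
      (fun hx => (hcx ((h0 x).lt_of_ne' hx)).ne')
  rw [integral_congr_ae hsplit, integral_add (integrable_mul_logb_div hf h0 h1 _)
    (hfi.mul_const _), integral_mul_const]

lemma integral_withDensity_ofReal {f : α → ℝ} (hf : Measurable f) (h0 : ∀ x, 0 ≤ f x)
    (g : α → ℝ) :
    ∫ x, g x ∂(μ.withDensity fun x => ENNReal.ofReal (f x)) = ∫ x, f x * g x ∂μ := by
  rw [integral_withDensity_eq_integral_toReal_smul hf.ennreal_ofReal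
    (ae_of_all _ fun _ => ENNReal.ofReal_lt_top)]
  simp only [ENNReal.toReal_ofReal (h0 _), smul_eq_mul]

lemma integrable_withDensity_ofReal_iff {f : α → ℝ} (hf : Measurable f) (h0 : ∀ x, 0 ≤ f x)
    {g : α → ℝ} :
    Integrable g (μ.withDensity fun x => ENNReal.ofReal (f x)) ↔
      Integrable (fun x => f x * g x) μ := by
  rw [integrable_withDensity_iff_integrable_smul' hf.ennreal_ofReal
    (ae_of_all _ fun _ => ENNReal.ofReal_lt_top)]
  simp only [ENNReal.toReal_ofReal (h0 _), smul_eq_mul]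

lemma klDivE_eq_integral_log {μ ν : Measure α} [SigmaFinite ν] {g : α → ℝ} (hg : Measurable g)
    (h0 : ∀ x, 0 ≤ g x) (hμ : μ = ν.withDensity fun x => ENNReal.ofReal (g x))
    (hi : Integrable (fun x => log (g x)) μ) :
    klDivE μ ν = ((∫ x, log (g x) ∂μ : ℝ) : EReal) := by
  have hac : μ ≪ ν := hμ ▸ withDensity_absolutelyContinuous _ _
  have hrn : ∀ᵐ x ∂μ, log (μ.rnDeriv ν x).toReal = log (g x) := by
    have := Measure.rnDeriv_withDensity ν hg.ennreal_ofReal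
    rw [← hμ] at this
    filter_upwards [hac.ae_eq this] with x hx
    rw [hx, ENNReal.toReal_ofReal (h0 x)]
  rw [klDivE, if_pos ⟨hac, hi.congr (hrn.mono fun x hx => hx.symm)⟩, integral_congr_ae hrn]

end Integral

theorem MeasureTheory.Measure.ext_of_prod_singleton {α ι : Type*} [MeasurableSpace α]
    [MeasurableSpace ι] [Countable ι] [MeasurableSingletonClass ι] {μ ν : Measure (α × ι)}
    (h : ∀ j B, MeasurableSet B → μ (B ×ˢ {j}) = ν (B ×ˢ {j})) : μ = ν := by
  ext S hS
  have hS' : S = ⋃ j, ((fun x => (x, j)) ⁻¹' S) ×ˢ ({j} : Set ι) := by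
    ext ⟨x, i⟩
    simp
  have hdisj : Pairwise (Function.onFun Disjoint
      fun j => ((fun x => (x, j)) ⁻¹' S) ×ˢ ({j} : Set ι)) :=
    fun i j hij => Set.disjoint_prod.2 (Or.inr (Set.disjoint_singleton.2 hij))
  have hmeas : ∀ j, MeasurableSet (((fun x => (x, j)) ⁻¹' S) ×ˢ ({j} : Set ι)) :=
    fun j => (measurable_prodMk_right hS).prod (measurableSet_singleton j)
  rw [hS', measure_iUnion hdisj hmeas, measure_iUnion hdisj hmeas]
  exact tsum_congr fun j => h j _ (measurable_prodMk_right hS)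

structure IsMarkovFun {α ι : Type*} [MeasurableSpace α] [Fintype ι] (w : α → ι → ℝ) : Prop where
  measurable : Measurable w
  nonneg : ∀ x j, 0 ≤ w x j
  sum_eq_one : ∀ x, ∑ j, w x j = 1

/-- The law of `(X, Y)` when `X ∼ P` and `Y` is drawn from the distribution `w X`. -/
noncomputable def jointMeasure {α ι : Type*} [MeasurableSpace α] [Fintype ι] [MeasurableSpace ι]
    (P : Measure α) (w : α → ι → ℝ) : Measure (α × ι) :=
  ∑ j, (P.withDensity fun x => ENNReal.ofReal (w x j)).map fun x => (x, j)

section JointMeasure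

variable {α ι : Type*} [MeasurableSpace α] [Fintype ι] {P : Measure α} {w : α → ι → ℝ}

namespace IsMarkovFun

lemma measurable_apply (hw : IsMarkovFun w) (j : ι) : Measurable fun x => w x j :=
  measurable_pi_iff.1 hw.measurable j

lemma le_one (hw : IsMarkovFun w) (x : α) (j : ι) : w x j ≤ 1 :=
  hw.sum_eq_one x ▸ Finset.single_le_sum (fun i _ => hw.nonneg x i) (Finset.mem_univ j)

lemma integrable_apply [IsFiniteMeasure P] (hw : IsMarkovFun w) (j : ι) :
    Integrable (fun x => w x j) P :=
  (integrable_const 1).mono' (hw.measurable_apply j).aestronglyMeasurable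
    (ae_of_all _ fun x => by rw [Real.norm_of_nonneg (hw.nonneg x j)]; exact hw.le_one x j)

end IsMarkovFun

variable [MeasurableSpace ι]

lemma jointMeasure_apply {S : Set (α × ι)} (hS : MeasurableSet S) :
    jointMeasure P w S = ∑ j, ∫⁻ x in (fun x => (x, j)) ⁻¹' S, ENNReal.ofReal (w x j) ∂P := by
  simp only [jointMeasure, Measure.coe_finsetSum, Finset.sum_apply,
    Measure.map_apply measurable_prodMk_right hS, withDensity_apply _ (measurable_prodMk_right hS)]

lemma jointMeasure_map_fst (hw : IsMarkovFun w) : (jointMeasure P w).map Prod.fst = P := by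
  ext B hB
  have hsum : ∀ x, ∑ j, ENNReal.ofReal (w x j) = 1 := fun x => by
    rw [← ENNReal.ofReal_sum_of_nonneg fun j _ => hw.nonneg x j, hw.sum_eq_one, ENNReal.ofReal_one]
  rw [Measure.map_apply measurable_fst hB, jointMeasure_apply (measurable_fst hB)]
  change ∑ j, ∫⁻ x in B, ENNReal.ofReal (w x j) ∂P = P B
  rw [← lintegral_finsetSum _ fun j _ => (hw.measurable_apply j).ennreal_ofReal]
  simp [hsum]

lemma isProbabilityMeasure_jointMeasure [IsProbabilityMeasure P] (hw : IsMarkovFun w) :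
    IsProbabilityMeasure (jointMeasure P w) := by
  have := congrArg (· Set.univ) (jointMeasure_map_fst hw (P := P))
  simp only [Measure.map_apply measurable_fst MeasurableSet.univ, Set.preimage_univ,
    measure_univ] at this
  exact ⟨this⟩

lemma integrable_jointMeasure_iff (hw : IsMarkovFun w) {g : α × ι → ℝ} (hg : Measurable g) :
    Integrable g (jointMeasure P w) ↔ ∀ j, Integrable (fun x => w x j * g (x, j)) P := by
  simp only [jointMeasure, integrable_finsetSum_measure, Finset.mem_univ, true_implies,
    integrable_map_measure hg.aestronglyMeasurable measurable_prodMk_right.aemeasurable]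
  exact forall_congr' fun j =>
    integrable_withDensity_ofReal_iff (hw.measurable_apply j) (hw.nonneg · j)

lemma integral_jointMeasure (hw : IsMarkovFun w) {g : α × ι → ℝ} (hg : Measurable g)
    (hi : ∀ j, Integrable (fun x => w x j * g (x, j)) P) :
    ∫ p, g p ∂(jointMeasure P w) = ∑ j, ∫ x, w x j * g (x, j) ∂P := by
  have hij : ∀ j ∈ Finset.univ,
      Integrable g ((P.withDensity fun x => ENNReal.ofReal (w x j)).map fun x => (x, j)) := by
    intro j _
    rw [integrable_map_measure hg.aestronglyMeasurable measurable_prodMk_right.aemeasurable,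
      Function.comp_def, integrable_withDensity_ofReal_iff (hw.measurable_apply j) (hw.nonneg · j)]
    exact hi j
  rw [jointMeasure, integral_finsetSum_measure hij]
  refine Finset.sum_congr rfl fun j _ => ?_
  rw [integral_map measurable_prodMk_right.aemeasurable hg.aestronglyMeasurable,
    integral_withDensity_ofReal (hw.measurable_apply j) (hw.nonneg · j)]

lemma integral_jointMeasure_of_bounded [IsFiniteMeasure P] (hw : IsMarkovFun w)
    {g : α × ι → ℝ} (hg : Measurable g) {M : ℝ}
    (hM : ∀ᵐ x ∂P, ∀ j, |g (x, j)| ≤ M) :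
    ∫ p, g p ∂(jointMeasure P w) = ∫ x, ∑ j, w x j * g (x, j) ∂P := by
  have hi : ∀ j, Integrable (fun x => w x j * g (x, j)) P := fun j =>
    (integrable_const M).mono' ((hw.measurable_apply j).mul
      (hg.comp measurable_prodMk_right)).aestronglyMeasurable <| by
      filter_upwards [hM] with x hx
      rw [Real.norm_eq_abs, abs_mul, abs_of_nonneg (hw.nonneg x j)]
      exact (mul_le_of_le_one_left (abs_nonneg _) (hw.le_one x j)).trans (hx j)
  rw [integral_jointMeasure hw hg hi, integral_finsetSum _ fun j _ => hi j]

variable [MeasurableSingletonClass ι]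

lemma jointMeasure_apply_prod_singleton {B : Set α} (hB : MeasurableSet B) (j : ι) :
    jointMeasure P w (B ×ˢ {j}) = ∫⁻ x in B, ENNReal.ofReal (w x j) ∂P := by
  rw [jointMeasure_apply (hB.prod (measurableSet_singleton j)),
    Finset.sum_eq_single j (fun i _ hi => by simp [hi]) (by simp)]
  simp

lemma jointMeasure_map_snd_singleton [IsFiniteMeasure P] (hw : IsMarkovFun w) (j : ι) :
    (jointMeasure P w).map Prod.snd {j} = ENNReal.ofReal (∫ x, w x j ∂P) := by
  rw [Measure.map_apply measurable_snd (measurableSet_singleton j), ← Set.univ_prod,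
    jointMeasure_apply_prod_singleton MeasurableSet.univ, Measure.restrict_univ,
    ofReal_integral_eq_lintegral_ofReal (hw.integrable_apply j) (ae_of_all _ (hw.nonneg · j))]

lemma jointMeasure_eq_withDensity [IsFiniteMeasure P] (hw : IsMarkovFun w) :
    jointMeasure P w = (P.prod ((jointMeasure P w).map Prod.snd)).withDensity
      fun p => ENNReal.ofReal (w p.1 p.2 / ∫ x, w x p.2 ∂P) := by
  have hf : Measurable fun p : α × ι => ENNReal.ofReal (w p.1 p.2 / ∫ x, w x p.2 ∂P) :=
    measurable_from_prod_countable_left fun j =>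
      ((hw.measurable_apply j).div_const (∫ x, w x j ∂P)).ennreal_ofReal
  refine Measure.ext_of_prod_singleton fun j B hB => ?_
  rw [jointMeasure_apply_prod_singleton hB,
    withDensity_apply _ (hB.prod (measurableSet_singleton j)), ← Measure.prod_restrict,
    lintegral_prod _ hf.aemeasurable]
  refine lintegral_congr_ae (ae_restrict_of_ae ?_)
  filter_upwards [ae_integral_pos_of_pos (ae_of_all _ (hw.nonneg · j)) (hw.integrable_apply j)]
    with x hx
  have hq : ∫ y, w y j ∂P = 0 → w x j = 0 := fun hq =>
    (not_lt.1 fun hpos => (hx hpos).ne' hq).antisymm (hw.nonneg x j)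
  rw [lintegral_singleton, jointMeasure_map_snd_singleton hw j,
    ← ENNReal.ofReal_mul (div_nonneg (hw.nonneg x j) (integral_nonneg (hw.nonneg · j))),
    div_mul_cancel_of_imp hq]

lemma exists_isMarkovFun_eq_jointMeasure [StandardBorelSpace ι] (W : Measure (α × ι))
    [IsProbabilityMeasure W] :
    ∃ w : α → ι → ℝ, IsMarkovFun w ∧ W = jointMeasure (W.map Prod.fst) w := by
  have : Nonempty ι := ⟨(nonempty_of_isProbabilityMeasure W).some.2⟩
  refine ⟨fun x j => (W.condKernel x {j}).toReal,
    ⟨?_, fun x j => ENNReal.toReal_nonneg, fun x => ?_⟩, ?_⟩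
  · exact measurable_pi_lambda _ fun j =>
      (W.condKernel.measurable_coe (measurableSet_singleton j)).ennreal_toReal
  · rw [← ENNReal.toReal_sum fun j _ => measure_ne_top _ _, sum_measure_singleton]
    simp
  · refine Measure.ext_of_prod_singleton fun j B hB => ?_
    conv_lhs => rw [← W.disintegrate W.condKernel]
    rw [Measure.compProd_apply_prod hB (measurableSet_singleton j),
      jointMeasure_apply_prod_singleton hB]
    exact lintegral_congr fun x => (ENNReal.ofReal_toReal (measure_ne_top _ _)).symm

end JointMeasure

section FiniteAlphabet

variable {k : ℕ} {P : Measure ℝ} [IsProbabilityMeasure P] {w : ℝ → Fin k → ℝ}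

lemma mutInfo_jointMeasure (hw : IsMarkovFun w) :
    mutInfo (jointMeasure P w) =
      ((∑ j, ∫ x, w x j * logb 2 (w x j / ∫ y, w y j ∂P) ∂P : ℝ) : EReal) := by
  have := isProbabilityMeasure_jointMeasure (P := P) hw
  have hdm : Measurable fun p : ℝ × Fin k => w p.1 p.2 / ∫ y, w y p.2 ∂P :=
    measurable_from_prod_countable_left fun j =>
      (hw.measurable_apply j).div_const (∫ y, w y j ∂P)
  have hlog : Measurable fun p : ℝ × Fin k => log (w p.1 p.2 / ∫ y, w y p.2 ∂P) :=
    measurable_log.comp hdm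
  have hi : ∀ j, Integrable (fun x => w x j * log (w x j / ∫ y, w y j ∂P)) P := fun j =>
    integrable_mul_log_div (hw.measurable_apply j) (hw.nonneg · j) (hw.le_one · j) _
  have hdens : ∀ p : ℝ × Fin k, 0 ≤ w p.1 p.2 / ∫ y, w y p.2 ∂P := fun p =>
    div_nonneg (hw.nonneg _ _) (integral_nonneg (hw.nonneg · _))
  rw [mutInfo, jointMeasure_map_fst hw,
    klDivE_eq_integral_log hdm hdens (jointMeasure_eq_withDensity hw)
      ((integrable_jointMeasure_iff hw hlog).2 hi),
    integral_jointMeasure hw hlog hi, ← EReal.coe_mul, Finset.mul_sum]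
  congr 1
  refine Finset.sum_congr rfl fun j _ => ?_
  rw [← integral_const_mul]
  congr 1 with x
  rw [logb]
  ring

lemma margRelEnt_jointMeasure (hw : IsMarkovFun w) {Q : Fin k → ℝ} (hQ : ∀ j, 0 ≤ Q j) :
    margRelEnt (jointMeasure P w) Q =
      if ∀ᵐ x ∂P, ∀ j, 0 < w x j → 0 < Q j then
        ((∑ j, (∫ x, w x j ∂P) * logb 2 ((∫ x, w x j ∂P) / Q j) : ℝ) : EReal)
      else ⊤ := by
  simp only [margRelEnt, jointMeasure_map_snd_singleton hw, ENNReal.ofReal_eq_zero,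
    ENNReal.toReal_ofReal (integral_nonneg (hw.nonneg · _)),
    ae_forall_pos_imp_pos_iff (fun j x => hw.nonneg x j) hw.integrable_apply hQ]

theorem mutInfo_add_margRelEnt_jointMeasure (hw : IsMarkovFun w) {Q : Fin k → ℝ}
    (hQ : ∀ j, 0 ≤ Q j) :
    mutInfo (jointMeasure P w) + margRelEnt (jointMeasure P w) Q = wCost P Q w := by
  rw [mutInfo_jointMeasure hw, margRelEnt_jointMeasure hw hQ, wCost]
  split_ifs with hsupp
  · rw [← EReal.coe_add, ← Finset.sum_add_distrib, integral_finsetSum _ fun j _ =>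
      integrable_mul_logb_div (hw.measurable_apply j) (hw.nonneg · j) (hw.le_one · j) _]
    congr 1
    exact Finset.sum_congr rfl fun j _ => (integral_mul_logb_div_eq_add (hw.measurable_apply j)
      (hw.nonneg · j) (hw.le_one · j) (hsupp.mono fun x hx => hx j)).symm
  · exact EReal.coe_add_top _

end FiniteAlphabet

theorem stmt_10_general {k : ℕ} (A : Set ℝ)
    (P : Measure ℝ) [IsProbabilityMeasure P] (hsupp : P Aᶜ = 0)
    (M : ℝ) (ρ : ℝ → Fin k → ℝ) (hρmeas : ∀ j, Measurable fun x => ρ x j)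
    (hρnn : ∀ x ∈ A, ∀ j, 0 ≤ ρ x j) (hρM : ∀ x ∈ A, ∀ j, ρ x j ≤ M)
    (Q : Fin k → ℝ) (hQ : IsPmf Q) (D : ℝ) :
    (⨅ W ∈ {W : Measure (ℝ × Fin k) | IsProbabilityMeasure W ∧
        W.map Prod.fst = P ∧ ∫ p, ρ p.1 p.2 ∂W ≤ D},
      mutInfo W + margRelEnt W Q) = RPQ P ρ Q D := by
  have hbdd : ∀ᵐ x ∂P, ∀ j, |ρ x j| ≤ M := by
    filter_upwards [mem_ae_iff.2 hsupp] with x hx j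
    exact abs_le.2 ⟨by linarith [hρnn x hx j, hρM x hx j], hρM x hx j⟩
  have hdist : ∀ w, IsMarkovFun w →
      ∫ p, ρ p.1 p.2 ∂(jointMeasure P w) = ∫ x, ∑ j, w x j * ρ x j ∂P := fun w hw =>
    integral_jointMeasure_of_bounded hw (measurable_from_prod_countable_left hρmeas) hbdd
  apply le_antisymm
  · refine le_iInf₂ fun w ⟨hwm, hwnn, hwsum, hwD⟩ => ?_
    have hw : IsMarkovFun w := ⟨hwm, hwnn, hwsum⟩
    rw [← mutInfo_add_margRelEnt_jointMeasure hw hQ.1]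
    exact iInf₂_le _ ⟨isProbabilityMeasure_jointMeasure hw, jointMeasure_map_fst hw,
      (hdist w hw).trans_le hwD⟩
  · refine le_iInf₂ fun W ⟨hW, hWfst, hWD⟩ => ?_
    obtain ⟨w, hw, hWw⟩ := exists_isMarkovFun_eq_jointMeasure W
    rw [hWfst] at hWw
    subst hWw
    rw [mutInfo_add_margRelEnt_jointMeasure hw hQ.1]
    exact iInf₂_le _ ⟨hw.measurable, hw.nonneg, hw.sum_eq_one, (hdist w hw).symm.trans_le hWD⟩

/-- **Proposition 1(i).** For every pmf `Q` and `D ≥ 0`, the infimum of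
`I_W(X;Y) + H(W_Y‖Q)` over joint probability measures `W` on `A × Â` with
first marginal `P` and `∫ ρ dW ≤ D` equals `R(P,Q,D)`, the corresponding
infimum over Markov kernels. -/
theorem stmt_10 {k : ℕ} (hk : 0 < k) (A : Set ℝ) (hA : MeasurableSet A)
    (P : Measure ℝ) [IsProbabilityMeasure P] (hsupp : P Aᶜ = 0)
    (M : ℝ) (ρ : ℝ → Fin k → ℝ) (hρmeas : ∀ j, Measurable fun x => ρ x j)
    (hρnn : ∀ x ∈ A, ∀ j, 0 ≤ ρ x j) (hρM : ∀ x ∈ A, ∀ j, ρ x j ≤ M)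
    (hρmin : ∀ x ∈ A, ∃ j, ρ x j = 0)
    (Q : Fin k → ℝ) (hQ : IsPmf Q) (D : ℝ) (hD : 0 ≤ D) :
    (⨅ W ∈ {W : Measure (ℝ × Fin k) | IsProbabilityMeasure W ∧
        W.map Prod.fst = P ∧ ∫ p, ρ p.1 p.2 ∂W ≤ D},
      mutInfo W + margRelEnt W Q) = RPQ P ρ Q D :=
  stmt_10_general A P hsupp M ρ hρmeas hρnn hρM Q hQ D
end
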